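/- arXiv:0807.1904 — 2 statements merged into one kernel-verified Lean document; each statement's English description precedes it below -/
import Mathlib

section
/- For every real two-form F and every vector t on 4-dimensional Minkowski space, writing t_a = η_{ab} t^b, the following identity holds for all indices m, n: (*F)_{mx} t^x (*F)_{ny} t^y = (1/2) F_{ab} F^{ab} (t_m t_n - (t_x t^x) η_{mn}) + η_{mn} (F_{xa} t^x)(F^{ya} t_y) - (F_{nx} t^x)(F_{my} t^y) + (F^{bx} t_x) t_m F_{nb} + (F^{bx} t_x) t_n F_{mb} + (t_x t^x) F_{ma} F_n{}^a. -/
/- The metric is diagonal, so every η-contraction collapses to a sign. What is left on both sides is a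
polynomial in the six independent components of `F` and the four of `t`, and the identity is checked
componentwise for each of the sixteen index pairs `(m, n)`. -/

noncomputable section

/-- Minkowski metric `η = diag(-1,1,1,1)`. -/
def mk (a b : Fin 4) : ℝ := if a = b then (if a = 0 then -1 else 1) else 0

/-- Levi-Civita symbol, totally antisymmetric with `ε₀₁₂₃ = 1`
(Vandermonde product of the index values, normalized). -/
def lc (a b c d : Fin 4) : ℝ :=
  ((((b : ℕ) : ℝ) - ((a : ℕ) : ℝ)) * (((c : ℕ) : ℝ) - ((a : ℕ) : ℝ)) *
      (((d : ℕ) : ℝ) - ((a : ℕ) : ℝ)) * (((c : ℕ) : ℝ) - ((b : ℕ) : ℝ)) *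
      (((d : ℕ) : ℝ) - ((b : ℕ) : ℝ)) * (((d : ℕ) : ℝ) - ((c : ℕ) : ℝ))) / 12

/-- Complexified Minkowski metric. -/
def mkC (a b : Fin 4) : ℂ := (mk a b : ℝ)

/-- Complexified Levi-Civita symbol. -/
def lcC (a b c d : Fin 4) : ℂ := (lc a b c d : ℝ)

/-- Hodge dual of a real two-form: `(*X)_{ab} = (1/2) ε_{abcd} X^{cd}`. -/
def dualR (X : Fin 4 → Fin 4 → ℝ) (a b : Fin 4) : ℝ :=
  (1/2) * ∑ c, ∑ d, ∑ e, ∑ f, lc a b c d * mk c e * mk d f * X e f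

/-- Hodge dual of a complex two-form. -/
def dualC (X : Fin 4 → Fin 4 → ℂ) (a b : Fin 4) : ℂ :=
  (1/2) * ∑ c, ∑ d, ∑ e, ∑ f, lcC a b c d * mkC c e * mkC d f * X e f

/-- Anti-self-dual part `𝒳_{ab} = (1/2)(X_{ab} + i (*X)_{ab})` of a real two-form. -/
def asd (X : Fin 4 → Fin 4 → ℝ) (a b : Fin 4) : ℂ :=
  (1/2) * ((X a b : ℂ) + Complex.I * (dualR X a b : ℂ))

/-- Lowering an index with the Minkowski metric: `t_a = η_{ab} t^b`. -/
def lo (t : Fin 4 → ℝ) (a : Fin 4) : ℝ := ∑ b, mk a b * t b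

theorem sum_mk_mul (a : Fin 4) (f : Fin 4 → ℝ) : ∑ b, mk a b * f b = mk a a * f a := by
  simp [mk, ite_mul]

theorem lo_apply (t : Fin 4 → ℝ) (a : Fin 4) : lo t a = mk a a * t a := sum_mk_mul a t

theorem dualR_eq_sum_lc (X : Fin 4 → Fin 4 → ℝ) (a b : Fin 4) :
    dualR X a b = (1/2) * ∑ c, ∑ d, lc a b c d * mk c c * mk d d * X c d := by
  simp only [dualR, mul_assoc, ← Finset.mul_sum, sum_mk_mul]

set_option maxHeartbeats 3000000 in
/-- the identity (13) of Mars for `(*F)_{mx} t^x (*F)_{ny} t^y`. -/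
theorem dual_squared_contraction_identity (F : Fin 4 → Fin 4 → ℝ)
    (hF : ∀ a b, F a b = - F b a) (t : Fin 4 → ℝ) :
    ∀ m n,
      (∑ x, dualR F m x * t x) * (∑ y, dualR F n y * t y)
        = (1/2) * (∑ a, ∑ b, ∑ c, ∑ d, F a b * mk a c * mk b d * F c d) *
            (lo t m * lo t n - (∑ x, lo t x * t x) * mk m n)
          + mk m n * (∑ a, (∑ x, F x a * t x) * (∑ c, ∑ d, mk a d * F c d * t c))
          - (∑ x, F n x * t x) * (∑ y, F m y * t y)
          + (∑ b, (∑ c, ∑ d, mk b c * F c d * t d) * F n b) * lo t m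
          + (∑ b, (∑ c, ∑ d, mk b c * F c d * t d) * F m b) * lo t n
          + (∑ x, lo t x * t x) * (∑ a, ∑ c, F m a * mk a c * F n c) := by
  have hF_diag : ∀ a, F a a = 0 := fun a => by linarith [hF a a]
  have hF_lower : ∀ a b, b < a → F a b = -F b a := fun a b _ => hF a b
  intro m n
  fin_cases m <;> fin_cases n <;>
    simp [dualR_eq_sum_lc, lo_apply, Fin.sum_univ_four, mk, lc, hF_diag, hF_lower] <;> ring
end
end

section
/- Let T be a symmetric trace-free real two-index tensor on 4-dimensional Minkowski space (T_{ab} = T_{ba}, η^{ab} T_{ab} = 0) and set E_{abcd} = (1/2)(T_{ac} η_{bd} + T_{bd} η_{ac} - T_{ad} η_{bc} - T_{bc} η_{ad}). Then E intertwines the two duality eigenspaces: for every anti-self-dual complex two-form 𝒳, the complex two-form (a,b) ↦ E_{abcd} 𝒳^{cd} is self-dual, and for every self-dual complex two-form 𝒵, the complex two-form (a,b) ↦ E_{abcd} 𝒵^{cd} is anti-self-dual. -/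
noncomputable section

/-- The Kulkarni–Nomizu-type tensor
`E_{abcd} = (1/2)(T_{ac}η_{bd} + T_{bd}η_{ac} - T_{ad}η_{bc} - T_{bc}η_{ad})`. -/
def knE (T : Fin 4 → Fin 4 → ℝ) (a b c d : Fin 4) : ℝ :=
  (1/2) * (T a c * mk b d + T b d * mk a c - T a d * mk b c - T b c * mk a d)

/-! With one index of `T` raised, `E` acts on two-forms by `X ↦ TX - (TX)ᵀ`. For `T` symmetric and
trace-free this operator anticommutes with the Hodge star, which is a direct componentwise check
once `*` is written out on antisymmetric forms (it just permutes components, up to sign). An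
operator anticommuting with `*` exchanges its `-i` and `+i` eigenspaces. -/

lemma sum_mkC_mul_mkC_mul (A X : Fin 4 → Fin 4 → ℂ) :
    ∑ c, ∑ d, ∑ e, ∑ f, A c d * mkC c e * mkC d f * X e f
      = ∑ c, ∑ d, A c d * mkC c c * mkC d d * X c d := by
  simp [Fin.sum_univ_four, mkC, mk]

lemma diag_eq_zero_of_antisymm {X : Fin 4 → Fin 4 → ℂ} (hX : ∀ a b, X a b = -X b a) (c : Fin 4) :
    X c c = 0 :=
  CharZero.eq_neg_self_iff.mp (hX c c)

lemma lc_swap (a b c d : Fin 4) : lc b a c d = -lc a b c d := by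
  unfold lc; ring

lemma dualC_antisymm (X : Fin 4 → Fin 4 → ℂ) (a b : Fin 4) : dualC X a b = -dualC X b a := by
  simp only [dualC, lcC, lc_swap b a, Complex.ofReal_neg, neg_mul, Finset.sum_neg_distrib, mul_neg]

lemma dualC_eq_of_antisymm {X : Fin 4 → Fin 4 → ℂ} (hX : ∀ a b, X a b = -X b a) :
    dualC X = ![![0, X 2 3, X 3 1, X 1 2],
                 ![X 3 2, 0, X 3 0, X 0 2],
                 ![X 1 3, X 0 3, 0, X 1 0],
                 ![X 2 1, X 2 0, X 0 1, 0]] := by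
  ext a b
  rw [dualC, sum_mkC_mul_mkC_mul]
  fin_cases a <;> fin_cases b <;>
    simp [Fin.sum_univ_four, lcC, lc, mkC, mk, hX 1 0, hX 2 0, hX 3 0, hX 2 1, hX 3 1, hX 3 2] <;>
    ring

def knEAct (T : Fin 4 → Fin 4 → ℝ) (X : Fin 4 → Fin 4 → ℂ) (a b : Fin 4) : ℂ :=
  ∑ c, ∑ d, ∑ e, ∑ f, (knE T a b c d : ℂ) * mkC c e * mkC d f * X e f

lemma knE_swap (T : Fin 4 → Fin 4 → ℝ) (a b c d : Fin 4) : knE T b a c d = -knE T a b c d := by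
  unfold knE; ring

lemma knEAct_antisymm (T : Fin 4 → Fin 4 → ℝ) (X : Fin 4 → Fin 4 → ℂ) (a b : Fin 4) :
    knEAct T X a b = -knEAct T X b a := by
  simp only [knEAct, knE_swap T b a, Complex.ofReal_neg, neg_mul, Finset.sum_neg_distrib]

lemma knEAct_const_mul (T : Fin 4 → Fin 4 → ℝ) (z : ℂ) (X : Fin 4 → Fin 4 → ℂ) (a b : Fin 4) :
    knEAct T (fun e f => z * X e f) a b = z * knEAct T X a b := by
  simp only [knEAct, Finset.mul_sum]
  congr! 4 with c d e f
  ring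

lemma knEAct_eq_of_antisymm (T : Fin 4 → Fin 4 → ℝ) {X : Fin 4 → Fin 4 → ℂ}
    (hX : ∀ a b, X a b = -X b a) (a b : Fin 4) :
    knEAct T X a b = ∑ c, mkC c c * (T a c * X c b - T b c * X c a) := by
  rw [knEAct, sum_mkC_mul_mkC_mul]
  fin_cases a <;> fin_cases b <;>
    simp [Fin.sum_univ_four, knE, mkC, mk, diag_eq_zero_of_antisymm hX, hX 1 0, hX 2 0, hX 3 0,
      hX 2 1, hX 3 1, hX 3 2] <;>
    ring

lemma dualC_knEAct {T : Fin 4 → Fin 4 → ℝ} (hT : ∀ a b, T a b = T b a)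
    (htr : ∑ a, ∑ b, mk a b * T a b = 0) {X : Fin 4 → Fin 4 → ℂ} (hX : ∀ a b, X a b = -X b a)
    (a b : Fin 4) : dualC (knEAct T X) a b = -knEAct T (dualC X) a b := by
  have hT00 : T 0 0 = T 1 1 + T 2 2 + T 3 3 := by
    simp [Fin.sum_univ_four, mk] at htr; linarith
  rw [dualC_eq_of_antisymm (knEAct_antisymm T X), knEAct_eq_of_antisymm T (dualC_antisymm X),
    dualC_eq_of_antisymm hX]
  fin_cases a <;> fin_cases b <;>
    simp [knEAct_eq_of_antisymm T hX, Fin.sum_univ_four, mkC, mk, diag_eq_zero_of_antisymm hX,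
      hT00, hT 1 0, hT 2 0, hT 3 0, hT 2 1, hT 3 1, hT 3 2,
      hX 1 0, hX 2 0, hX 3 0, hX 2 1, hX 3 1, hX 3 2] <;>
    ring

lemma dualC_knEAct_of_dualC_eq_mul {T : Fin 4 → Fin 4 → ℝ} (hT : ∀ a b, T a b = T b a)
    (htr : ∑ a, ∑ b, mk a b * T a b = 0) {X : Fin 4 → Fin 4 → ℂ} (hX : ∀ a b, X a b = -X b a)
    {z : ℂ} (hXz : ∀ a b, dualC X a b = z * X a b) (a b : Fin 4) :
    dualC (knEAct T X) a b = -z * knEAct T X a b := by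
  rw [dualC_knEAct hT htr hX, funext₂ hXz, knEAct_const_mul, neg_mul]

/-- `E` intertwines the duality eigenspaces: it sends anti-self-dual
two-forms to self-dual ones and vice versa. -/
theorem knE_intertwines_duality (T : Fin 4 → Fin 4 → ℝ)
    (hTsymm : ∀ a b, T a b = T b a) (hTtr : (∑ a, ∑ b, mk a b * T a b) = 0) :
    (∀ 𝒳 : Fin 4 → Fin 4 → ℂ, (∀ a b, 𝒳 a b = - 𝒳 b a) →
      (∀ a b, dualC 𝒳 a b = -Complex.I * 𝒳 a b) →
      ∀ a b, dualC (fun a' b' => ∑ c, ∑ d, ∑ e, ∑ f,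
          (knE T a' b' c d : ℂ) * mkC c e * mkC d f * 𝒳 e f) a b
        = Complex.I * (∑ c, ∑ d, ∑ e, ∑ f,
            (knE T a b c d : ℂ) * mkC c e * mkC d f * 𝒳 e f)) ∧
    (∀ 𝒵 : Fin 4 → Fin 4 → ℂ, (∀ a b, 𝒵 a b = - 𝒵 b a) →
      (∀ a b, dualC 𝒵 a b = Complex.I * 𝒵 a b) →
      ∀ a b, dualC (fun a' b' => ∑ c, ∑ d, ∑ e, ∑ f,
          (knE T a' b' c d : ℂ) * mkC c e * mkC d f * 𝒵 e f) a b
        = -Complex.I * (∑ c, ∑ d, ∑ e, ∑ f,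
            (knE T a b c d : ℂ) * mkC c e * mkC d f * 𝒵 e f)) := by
  refine ⟨fun X hX hasd a b => ?_, fun Z hZ hsd a b => ?_⟩
  · rw [← neg_neg Complex.I]
    exact dualC_knEAct_of_dualC_eq_mul hTsymm hTtr hX hasd a b
  · exact dualC_knEAct_of_dualC_eq_mul hTsymm hTtr hZ hsd a b
end
end
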